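/- Under the stated setting, the multi-agent system achieves mean square average consensus (Theorem 2): there exists a square-integrable random variable x* : Ω → ℝ such that lim_{k→∞} E[(x_i(k) − x*)²] = 0 for every i ∈ {1,…,N}, with E[x*] = (1/N)∑_{i=1}^N x_i(0) and Var(x*) ≤ (M/N)∑_{t=0}^∞ α(t)². -/

import Mathlib

open MeasureTheory Filter Matrix

/-!
The network average `x̄(k) = 𝔼ᵢ xᵢ(k)` does not see `L̄` (its rows and columns sum to zero), so
`x̄(k+1) = x̄(k) + α(k) w̄(k)` is a martingale whose increments have second moment at most
`M α(k)² / N`. Martingale increments are orthogonal in `L²`, so `x̄(k)` is Cauchy in `L²`; its limit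
`x*` has mean `x̄(0)` and variance at most the sum of these second moments.
The disagreement `e(k) = x(k) - x̄(k) 𝟙` sums to zero, so the spectral gap of `L̄`, together with
the orthogonality of the noise to the past, gives `V(k+1) ≤ (1 - 2λα(k) + Cα(k)²) V(k) + M α(k)²`
for `V(k) = E‖e(k)‖²` and `C = ∑ᵢⱼ L̄ᵢⱼ²`; since `∑ α = ∞` and `∑ α² < ∞`, this forces `V(k) → 0`.
-/

open Finset Fintype Topology
open scoped BigOperators

lemma exists_tendsto_of_le_add_of_summable {V b : ℕ → ℝ} (hV : ∀ k, 0 ≤ V k)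
    (hb : ∀ k, 0 ≤ b k) (hb_sum : Summable b) (hstep : ∀ k, V (k + 1) ≤ V k + b k) :
    ∃ ℓ, Tendsto V atTop (𝓝 ℓ) := by
  set S : ℕ → ℝ := fun k => V k - ∑ t ∈ range k, b t
  have hS_anti : Antitone S := antitone_nat_of_succ_le fun k => by
    simp only [S, sum_range_succ]; linarith [hstep k]
  have hS_bdd : BddBelow (Set.range S) := ⟨-∑' t, b t, by
    rintro _ ⟨k, rfl⟩
    linarith [hb_sum.sum_le_tsum (range k) (fun t _ => hb t), hV k]⟩
  exact ⟨_, ((tendsto_atTop_ciInf hS_anti hS_bdd).add hb_sum.hasSum.tendsto_sum_nat).congr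
    fun k => sub_add_cancel _ _⟩

lemma tendsto_zero_of_le_one_sub_mul_add {V a b : ℕ → ℝ} (hV : ∀ k, 0 ≤ V k)
    (ha : ∀ k, 0 ≤ a k) (hb : ∀ k, 0 ≤ b k) (ha_sum : ¬Summable a) (hb_sum : Summable b)
    (hstep : ∀ k, V (k + 1) ≤ (1 - a k) * V k + b k) : Tendsto V atTop (𝓝 0) := by
  have hdecr : ∀ k, a k * V k ≤ V k - V (k + 1) + b k := fun k => by linarith [hstep k]
  obtain ⟨ℓ, hℓ⟩ := exists_tendsto_of_le_add_of_summable hV hb hb_sum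
    fun k => by linarith [hdecr k, mul_nonneg (ha k) (hV k)]
  have haV : Summable fun k => a k * V k := by
    refine summable_of_sum_range_le (c := V 0 + ∑' t, b t)
      (fun k => mul_nonneg (ha k) (hV k)) fun n => ?_
    calc ∑ k ∈ range n, a k * V k ≤ ∑ k ∈ range n, (V k - V (k + 1) + b k) :=
          sum_le_sum fun k _ => hdecr k
      _ = V 0 - V n + ∑ k ∈ range n, b k := by rw [sum_add_distrib, sum_range_sub']
      _ ≤ V 0 + ∑' t, b t := by
          linarith [hb_sum.sum_le_tsum (range n) (fun t _ => hb t), hV n]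
  obtain rfl | hpos := (ge_of_tendsto' hℓ hV).eq_or_lt
  · exact hℓ
  refine absurd (Summable.of_norm_bounded_eventually_nat (haV.mul_left (2 / ℓ)) ?_) ha_sum
  filter_upwards [hℓ.eventually_const_le (half_lt_self hpos)] with k hk
  rw [Real.norm_of_nonneg (ha k)]
  calc a k = 2 / ℓ * (a k * (ℓ / 2)) := by field_simp
    _ ≤ 2 / ℓ * (a k * V k) := by gcongr; exact ha k

lemma tendsto_zero_of_le_one_sub_two_mul_add_sq {V α : ℕ → ℝ} {lam C M : ℝ} (hlam : 0 < lam)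
    (hM : 0 ≤ M) (hV : ∀ k, 0 ≤ V k) (hα : ∀ k, 0 ≤ α k) (hα_sum : ¬Summable α)
    (hα_sq : Summable fun k => α k ^ 2)
    (hstep : ∀ k, V (k + 1) ≤ (1 - 2 * lam * α k + C * α k ^ 2) * V k + M * α k ^ 2) :
    Tendsto V atTop (𝓝 0) := by
  have hα0 : Tendsto α atTop (𝓝 0) := by
    simpa [Real.sqrt_sq (hα _)] using hα_sq.tendsto_atTop_zero.sqrt
  have hCα0 : Tendsto (fun k => C * α k) atTop (𝓝 0) := by simpa using hα0.const_mul C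
  obtain ⟨K, hK⟩ := eventually_atTop.1 (hCα0.eventually_le_const hlam)
  rw [← tendsto_add_atTop_iff_nat K]
  refine tendsto_zero_of_le_one_sub_mul_add (a := fun k => lam * α (k + K))
    (b := fun k => M * α (k + K) ^ 2) (fun k => hV _) (fun k => mul_nonneg hlam.le (hα _))
    (fun k => by positivity) ?_ (((summable_nat_add_iff K).2 hα_sq).mul_left M) fun k => ?_
  · rwa [summable_mul_left_iff hlam.ne', summable_nat_add_iff K]
  · have hCα := mul_le_mul_of_nonneg_right (hK (k + K) (Nat.le_add_left K k)) (hα (k + K))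
    rw [Nat.add_right_comm]
    nlinarith [hstep (k + K), mul_le_mul_of_nonneg_right hCα (hV (k + K))]

lemma cauchySeq_of_dist_sq_le_dist {X : Type*} [PseudoMetricSpace X] {F : ℕ → X} {S : ℕ → ℝ}
    (hS : CauchySeq S) (h : ∀ p q, p ≤ q → dist (F p) (F q) ^ 2 ≤ dist (S p) (S q)) :
    CauchySeq F := by
  refine Metric.cauchySeq_iff.2 fun ε hε => ?_
  obtain ⟨N, hN⟩ := Metric.cauchySeq_iff.1 hS (ε ^ 2) (by positivity)
  refine ⟨N, fun p hp q hq => ?_⟩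
  have hsq : dist (F p) (F q) ^ 2 < ε ^ 2 := by
    rcases le_total p q with hpq | hqp
    · exact (h p q hpq).trans_lt (hN p hp q hq)
    · rw [dist_comm]; exact (h q p hqp).trans_lt (hN q hq p hp)
  exact lt_of_pow_lt_pow_left₀ 2 hε.le hsq

section Balance

variable {ι : Type*} [Fintype ι]

lemma sum_balance_sq_le (v : ι → ℝ) : ∑ i, balance v i ^ 2 ≤ ∑ i, v i ^ 2 := by
  have hsum : ∑ i, v i = card ι * 𝔼 i, v i := (card_mul_expect v).symm
  have : ∑ i, balance v i ^ 2 = ∑ i, v i ^ 2 - card ι * (𝔼 i, v i) ^ 2 := by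
    simp only [balance_apply, sub_sq, sum_add_distrib, sum_sub_distrib, ← sum_mul, ← mul_sum,
      hsum, sum_const, card_univ, nsmul_eq_mul]
    ring
  rw [this]
  nlinarith [sq_nonneg (𝔼 i, v i), (Nat.cast_nonneg (card ι) : (0 : ℝ) ≤ card ι)]

lemma sq_expect_le_sum_sq_div_card (v : ι → ℝ) :
    (𝔼 i, v i) ^ 2 ≤ (∑ i, v i ^ 2) / card ι := by
  rw [Fintype.expect_eq_sum_div_card, div_pow]
  rcases (card ι).eq_zero_or_pos with h | h
  · simp [h]
  rw [div_le_div_iff₀ (by positivity) (by positivity)]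
  have := sq_sum_le_card_mul_sum_sq (s := univ) (f := v)
  rw [card_univ] at this
  nlinarith

lemma balance_smul (a : ℝ) (v : ι → ℝ) : balance (a • v) = a • balance v := by
  ext i
  simp [balance_apply, mul_sub, ← mul_expect]

lemma continuous_expect : Continuous fun v : ι → ℝ => 𝔼 i, v i := by
  simp_rw [Fintype.expect_eq_sum_div_card]
  fun_prop

lemma continuous_balance : Continuous (balance : (ι → ℝ) → ι → ℝ) :=
  continuous_pi fun i => (continuous_apply i).sub continuous_expect

variable {L : Matrix ι ι ℝ}

lemma sum_mulVec_eq_zero (hL : L.IsSymm) (hL1 : L *ᵥ (fun _ => 1) = 0) (v : ι → ℝ) :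
    ∑ i, (L *ᵥ v) i = 0 := by
  have : ∑ i, (L *ᵥ v) i = (fun _ => 1) ⬝ᵥ L *ᵥ v := by simp [dotProduct]
  rw [this, dotProduct_mulVec, ← hL.eq, vecMul_transpose, hL1, zero_dotProduct]

lemma mulVec_balance (hL1 : L *ᵥ (fun _ => 1) = 0) (v : ι → ℝ) : L *ᵥ balance v = L *ᵥ v := by
  have : balance v = v - (𝔼 i, v i) • fun _ => 1 := by ext; simp [balance_apply]
  rw [this, mulVec_sub, mulVec_smul, hL1, smul_zero, sub_zero]

lemma one_sub_smul_mulVec [DecidableEq ι] (a : ℝ) (v : ι → ℝ) :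
    (1 - a • L) *ᵥ v = v - a • L *ᵥ v := by
  rw [sub_mulVec, one_mulVec, smul_mulVec]

lemma expect_sub_smul_mulVec_add (hL : L.IsSymm) (hL1 : L *ᵥ (fun _ => 1) = 0) (a : ℝ)
    (v u : ι → ℝ) : 𝔼 i, (v - a • L *ᵥ v + a • u) i = 𝔼 i, v i + a * 𝔼 i, u i := by
  have : 𝔼 i, (L *ᵥ v) i = 0 := by
    rw [Fintype.expect_eq_sum_div_card, sum_mulVec_eq_zero hL hL1, zero_div]
  simp only [Pi.add_apply, Pi.sub_apply, Pi.smul_apply, smul_eq_mul, expect_add_distrib,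
    expect_sub_distrib, ← mul_expect, this]
  ring

lemma balance_sub_smul_mulVec_add (hL : L.IsSymm) (hL1 : L *ᵥ (fun _ => 1) = 0) (a : ℝ)
    (v u : ι → ℝ) :
    balance (v - a • L *ᵥ v + a • u) = balance v - a • L *ᵥ balance v + a • balance u := by
  have : balance (L *ᵥ v) = L *ᵥ v := by
    ext i
    rw [balance_apply, Fintype.expect_eq_sum_div_card, sum_mulVec_eq_zero hL hL1, zero_div,
      sub_zero]
  rw [balance_add, balance_sub, balance_smul, balance_smul, this, mulVec_balance hL1]

lemma sum_mulVec_sq_le (v : ι → ℝ) :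
    ∑ i, (L *ᵥ v) i ^ 2 ≤ (∑ i, ∑ j, L i j ^ 2) * ∑ i, v i ^ 2 := by
  rw [sum_mul]
  exact sum_le_sum fun i _ => sum_mul_sq_le_sq_mul_sq _ _ _

lemma sum_sq_sub_smul_mulVec_le {lam C a : ℝ} (ha : 0 ≤ a) {v : ι → ℝ}
    (hgap : lam * ∑ i, v i ^ 2 ≤ v ⬝ᵥ L *ᵥ v) (hC : ∑ i, (L *ᵥ v) i ^ 2 ≤ C * ∑ i, v i ^ 2) :
    ∑ i, (v - a • L *ᵥ v) i ^ 2 ≤ (1 - 2 * lam * a + C * a ^ 2) * ∑ i, v i ^ 2 := by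
  have : ∑ i, (v - a • L *ᵥ v) i ^ 2
      = ∑ i, v i ^ 2 - 2 * a * (v ⬝ᵥ L *ᵥ v) + a ^ 2 * ∑ i, (L *ᵥ v) i ^ 2 := by
    simp only [Pi.sub_apply, Pi.smul_apply, smul_eq_mul, sub_sq, mul_pow, sum_add_distrib,
      sum_sub_distrib, mul_sum, dotProduct]
    congr 1; congr 1; exact sum_congr rfl fun i _ => by ring
  rw [this]
  nlinarith [mul_le_mul_of_nonneg_left hgap (by positivity : (0 : ℝ) ≤ 2 * a),
    mul_le_mul_of_nonneg_left hC (sq_nonneg a)]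

end Balance

namespace MeasureTheory

variable {ι : Type*} [Fintype ι] {Ω : Type*} {m mΩ : MeasurableSpace Ω} {μ : Measure Ω}
  {p : ENNReal}

lemma MemLp.mulVec {ι' : Type*} [Fintype ι'] {f : Ω → ι → ℝ}
    (A : Matrix ι' ι ℝ) (hf : MemLp f p μ) : MemLp (fun ω => A *ᵥ f ω) p μ :=
  (LinearMap.toContinuousLinearMap A.mulVecLin).comp_memLp' hf

lemma MemLp.expect {f : Ω → ι → ℝ} (hf : MemLp f p μ) :
    MemLp (fun ω => 𝔼 i, f ω i) p μ := by
  simp_rw [Fintype.expect_eq_sum_div_card, div_eq_inv_mul]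
  exact (memLp_finsetSum _ fun i _ => hf.eval i).const_mul _

lemma MemLp.balance {f : Ω → ι → ℝ} (hf : MemLp f p μ) :
    MemLp (fun ω => balance (f ω)) p μ :=
  memLp_pi_iff.2 fun i => (hf.eval i).sub hf.expect

lemma integral_sq_le_integral_sum_sq {f : Ω → ι → ℝ} (hf : MemLp f 2 μ) (i : ι) :
    ∫ ω, f ω i ^ 2 ∂μ ≤ ∫ ω, ∑ j, f ω j ^ 2 ∂μ :=
  integral_mono (hf.eval i).integrable_sq
    (integrable_finsetSum _ fun j _ => (hf.eval j).integrable_sq)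
    fun ω => single_le_sum (f := fun j => f ω j ^ 2) (fun _ _ => sq_nonneg _) (mem_univ i)

lemma Lp.norm_sq_eq_integral_sq (f : Lp ℝ 2 μ) : ‖f‖ ^ 2 = ∫ ω, f ω ^ 2 ∂μ := by
  rw [← real_inner_self_eq_norm_sq, L2.inner_def]
  simp [sq]

lemma MemLp.dist_toLp_sq {f g : Ω → ℝ} (hf : MemLp f 2 μ) (hg : MemLp g 2 μ) :
    dist (hf.toLp f) (hg.toLp g) ^ 2 = ∫ ω, (f ω - g ω) ^ 2 ∂μ := by
  rw [dist_eq_norm, ← hf.toLp_sub hg, Lp.norm_sq_eq_integral_sq]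
  exact integral_congr_ae <| (hf.sub hg).coeFn_toLp.mono fun ω hω => by simp [hω]

lemma integral_mul_eq_zero_of_condExp_eq_zero [IsFiniteMeasure μ] (hm : m ≤ mΩ)
    [SigmaFinite (μ.trim hm)]
    {Y ξ : Ω → ℝ} (hY : StronglyMeasurable[m] Y) (hY2 : MemLp Y 2 μ) (hξ2 : MemLp ξ 2 μ)
    (hξ : μ[ξ | m] =ᵐ[μ] 0) : ∫ ω, Y ω * ξ ω ∂μ = 0 := by
  have hpull : μ[Y * ξ | m] =ᵐ[μ] Y * μ[ξ | m] :=
    condExp_mul_of_stronglyMeasurable_left hY (hY2.integrable_mul hξ2) (hξ2.integrable one_le_two)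
  calc ∫ ω, Y ω * ξ ω ∂μ = ∫ ω, μ[Y * ξ | m] ω ∂μ := (integral_condExp hm).symm
    _ = 0 := by
      rw [integral_congr_ae (hpull.trans (EventuallyEq.rfl.mul hξ))]
      simp

lemma integral_add_sq_of_condExp_eq_zero [IsFiniteMeasure μ] (hm : m ≤ mΩ)
    [SigmaFinite (μ.trim hm)]
    {Y ξ : Ω → ℝ} (hY : StronglyMeasurable[m] Y) (hY2 : MemLp Y 2 μ) (hξ2 : MemLp ξ 2 μ)
    (hξ : μ[ξ | m] =ᵐ[μ] 0) :
    ∫ ω, (Y ω + ξ ω) ^ 2 ∂μ = ∫ ω, Y ω ^ 2 ∂μ + ∫ ω, ξ ω ^ 2 ∂μ := by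
  have hYξ : Integrable (fun ω => 2 * (Y ω * ξ ω)) μ := (hY2.integrable_mul hξ2).const_mul 2
  have hexpand : ∀ ω, (Y ω + ξ ω) ^ 2 = Y ω ^ 2 + (ξ ω ^ 2 + 2 * (Y ω * ξ ω)) := fun ω => by ring
  simp_rw [hexpand]
  have hrest : Integrable (fun ω => ξ ω ^ 2 + 2 * (Y ω * ξ ω)) μ := hξ2.integrable_sq.add hYξ
  rw [integral_add hY2.integrable_sq hrest,
    integral_add hξ2.integrable_sq hYξ, integral_const_mul,
    integral_mul_eq_zero_of_condExp_eq_zero hm hY hY2 hξ2 hξ, mul_zero, add_zero]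

lemma sq_integral_le_integral_sq [IsProbabilityMeasure μ] {Z : Ω → ℝ} (hZ : MemLp Z 2 μ) :
    (∫ ω, Z ω ∂μ) ^ 2 ≤ ∫ ω, Z ω ^ 2 ∂μ := by
  have := ProbabilityTheory.variance_nonneg Z μ
  rw [ProbabilityTheory.variance_eq_sub hZ] at this
  simpa using this

lemma tendsto_integral_of_tendsto_integral_sq_sub [IsProbabilityMeasure μ]
    {g : ℕ → Ω → ℝ} {Y : Ω → ℝ} (hg2 : ∀ k, MemLp (g k) 2 μ) (hY2 : MemLp Y 2 μ)
    (hlim : Tendsto (fun k => ∫ ω, (g k ω - Y ω) ^ 2 ∂μ) atTop (𝓝 0)) :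
    Tendsto (fun k => ∫ ω, g k ω ∂μ) atTop (𝓝 (∫ ω, Y ω ∂μ)) := by
  have hsq : Tendsto (fun k => (∫ ω, g k ω ∂μ - ∫ ω, Y ω ∂μ) ^ 2) atTop (𝓝 0) := by
    refine squeeze_zero (fun k => sq_nonneg _) (fun k => ?_) hlim
    rw [← integral_sub ((hg2 k).integrable one_le_two) (hY2.integrable one_le_two)]
    exact sq_integral_le_integral_sq ((hg2 k).sub hY2)
  rw [tendsto_iff_norm_sub_tendsto_zero]
  simpa [Real.sqrt_sq_eq_abs] using hsq.sqrt

lemma tendsto_integral_sq_sub_trans {f g : ℕ → Ω → ℝ} {Y : Ω → ℝ}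
    (hf : ∀ k, MemLp (f k) 2 μ) (hg : ∀ k, MemLp (g k) 2 μ) (hY : MemLp Y 2 μ)
    (hfg : Tendsto (fun k => ∫ ω, (f k ω - g k ω) ^ 2 ∂μ) atTop (𝓝 0))
    (hgY : Tendsto (fun k => ∫ ω, (g k ω - Y ω) ^ 2 ∂μ) atTop (𝓝 0)) :
    Tendsto (fun k => ∫ ω, (f k ω - Y ω) ^ 2 ∂μ) atTop (𝓝 0) := by
  refine squeeze_zero (fun k => integral_nonneg fun ω => sq_nonneg _) (fun k => ?_)
    (by simpa using (hfg.const_mul 2).add (hgY.const_mul 2))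
  have hfg2 : Integrable (fun ω => 2 * (f k ω - g k ω) ^ 2) μ :=
    ((hf k).sub (hg k)).integrable_sq.const_mul 2
  have hgY2 : Integrable (fun ω => 2 * (g k ω - Y ω) ^ 2) μ :=
    ((hg k).sub hY).integrable_sq.const_mul 2
  calc ∫ ω, (f k ω - Y ω) ^ 2 ∂μ
      ≤ ∫ ω, (2 * (f k ω - g k ω) ^ 2 + 2 * (g k ω - Y ω) ^ 2) ∂μ :=
        integral_mono ((hf k).sub hY).integrable_sq (hfg2.add hgY2) fun ω => by
          nlinarith [sq_nonneg (f k ω - 2 * g k ω + Y ω)]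
    _ = _ := by rw [integral_add hfg2 hgY2, integral_const_mul, integral_const_mul]

lemma condExp_expect_eq_zero {ν : Ω → ι → ℝ} (hν : Integrable ν μ)
    (h : ∀ i, μ[fun ω => ν ω i | m] =ᵐ[μ] 0) : μ[fun ω => 𝔼 i, ν ω i | m] =ᵐ[μ] 0 := by
  have hsum : (fun ω => 𝔼 i, ν ω i) = (card ι : ℝ)⁻¹ • ∑ i, fun ω => ν ω i := by
    ext ω
    simp [Fintype.expect_eq_sum_div_card, div_eq_inv_mul]
  rw [hsum]
  filter_upwards [condExp_smul (card ι : ℝ)⁻¹ (∑ i, fun ω => ν ω i) m,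
    condExp_finsetSum (s := univ) (fun i _ => hν.eval i) m, ae_all_iff.2 h] with ω h1 h2 h3
  rw [h1, Pi.smul_apply, h2, Finset.sum_apply, sum_eq_zero fun i _ => h3 i]
  simp

lemma condExp_balance_eq_zero {ν : Ω → ι → ℝ} (hν : Integrable ν μ)
    (h : ∀ i, μ[fun ω => ν ω i | m] =ᵐ[μ] 0) (i : ι) :
    μ[fun ω => balance (ν ω) i | m] =ᵐ[μ] 0 := by
  have hint : Integrable (fun ω => 𝔼 j, ν ω j) μ := by
    simp_rw [Fintype.expect_eq_sum_div_card]
    exact (integrable_finsetSum _ fun j _ => hν.eval j).div_const _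
  filter_upwards [condExp_sub (hν.eval i) hint m, h i, condExp_expect_eq_zero hν h]
    with ω h1 h2 h3
  change μ[(fun ω => ν ω i) - fun ω => 𝔼 j, ν ω j | m] ω = (0 : Ω → ℝ) ω
  simp [h1, h2, h3]

lemma integral_sum_sq_sub_smul_mulVec_add_le [IsFiniteMeasure μ] (hm : m ≤ mΩ)
    [SigmaFinite (μ.trim hm)] {L : Matrix ι ι ℝ} {lam a : ℝ} (ha : 0 ≤ a)
    (hgap : ∀ v : ι → ℝ, ∑ i, v i = 0 → lam * ∑ i, v i ^ 2 ≤ v ⬝ᵥ L *ᵥ v)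
    {e ν : Ω → ι → ℝ} (he : Measurable[m] e) (he2 : MemLp e 2 μ) (he_sum : ∀ ω, ∑ i, e ω i = 0)
    (hν2 : MemLp ν 2 μ) (hν : ∀ i, μ[fun ω => ν ω i | m] =ᵐ[μ] 0) :
    ∫ ω, ∑ i, (e ω - a • L *ᵥ e ω + a • ν ω) i ^ 2 ∂μ ≤
      (1 - 2 * lam * a + (∑ i, ∑ j, L i j ^ 2) * a ^ 2) * ∫ ω, ∑ i, e ω i ^ 2 ∂μ +
        a ^ 2 * ∫ ω, ∑ i, ν ω i ^ 2 ∂μ := by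
  set G : Ω → ι → ℝ := fun ω => e ω - a • L *ᵥ e ω
  have hG : Measurable[m] G :=
    he.sub ((by fun_prop : Continuous fun v : ι → ℝ => a • L *ᵥ v).measurable.comp he)
  have hG2 : MemLp G 2 μ := he2.sub ((he2.mulVec L).const_smul a)
  have hpyth : ∀ i, ∫ ω, (G ω i + a * ν ω i) ^ 2 ∂μ
      = ∫ ω, G ω i ^ 2 ∂μ + a ^ 2 * ∫ ω, ν ω i ^ 2 ∂μ := fun i => by
    have hGi : StronglyMeasurable[m] fun ω => G ω i :=
      ((measurable_pi_apply i).comp hG).stronglyMeasurable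
    rw [integral_add_sq_of_condExp_eq_zero hm hGi (hG2.eval i)
      ((hν2.eval i).const_mul a) ((condExp_smul a _ m).trans ((hν i).mono fun ω h => ?_))]
    · simp_rw [mul_pow, integral_const_mul]
    · simp [h]
  have hG_sq : ∀ i, Integrable (fun ω => G ω i ^ 2) μ := fun i => (hG2.eval i).integrable_sq
  have hν_sq : ∀ i, Integrable (fun ω => ν ω i ^ 2) μ := fun i => (hν2.eval i).integrable_sq
  have he_sq : Integrable (fun ω => ∑ i, e ω i ^ 2) μ :=
    integrable_finsetSum _ fun i _ => (he2.eval i).integrable_sq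
  have hcontract : ∀ ω, ∑ i, G ω i ^ 2 ≤
      (1 - 2 * lam * a + (∑ i, ∑ j, L i j ^ 2) * a ^ 2) * ∑ i, e ω i ^ 2 := fun ω =>
    sum_sq_sub_smul_mulVec_le ha (hgap _ (he_sum ω)) (sum_mulVec_sq_le _)
  calc ∫ ω, ∑ i, (e ω - a • L *ᵥ e ω + a • ν ω) i ^ 2 ∂μ
      = ∑ i, ∫ ω, (G ω i + a * ν ω i) ^ 2 ∂μ := by
        rw [← integral_finsetSum (f := fun i ω => (G ω i + a * ν ω i) ^ 2) _ fun i _ =>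
          ((hG2.eval i).add ((hν2.eval i).const_mul a)).integrable_sq]
        rfl
    _ = ∫ ω, ∑ i, G ω i ^ 2 ∂μ + a ^ 2 * ∫ ω, ∑ i, ν ω i ^ 2 ∂μ := by
        rw [integral_finsetSum _ fun i _ => hG_sq i, integral_finsetSum _ fun i _ => hν_sq i,
          mul_sum, ← sum_add_distrib]
        exact sum_congr rfl fun i _ => hpyth i
    _ ≤ _ := by
        gcongr
        calc ∫ ω, ∑ i, G ω i ^ 2 ∂μ
            ≤ ∫ ω, (1 - 2 * lam * a + (∑ i, ∑ j, L i j ^ 2) * a ^ 2) * ∑ i, e ω i ^ 2 ∂μ :=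
              integral_mono (integrable_finsetSum _ fun i _ => hG_sq i) (he_sq.const_mul _)
                hcontract
          _ = _ := integral_const_mul _ _

namespace Martingale

variable {ℱ : Filtration ℕ mΩ} {g : ℕ → Ω → ℝ}

lemma condExp_succ_sub_eq_zero [IsFiniteMeasure μ] (hg : Martingale g ℱ μ) (k : ℕ) :
    μ[g (k + 1) - g k | ℱ k] =ᵐ[μ] 0 := by
  filter_upwards [condExp_sub (hg.integrable (k + 1)) (hg.integrable k) (ℱ k),
    hg.condExp_ae_eq k.le_succ] with ω h1 h2
  rw [h1, Pi.sub_apply, h2, condExp_of_stronglyMeasurable (ℱ.le k) (hg.stronglyMeasurable k)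
    (hg.integrable k), Pi.zero_apply, sub_self]

lemma integral_sub_sq_le_sum_Ico [IsFiniteMeasure μ] (hg : Martingale g ℱ μ)
    (hg2 : ∀ k, MemLp (g k) 2 μ) {b : ℕ → ℝ}
    (hinc : ∀ k, ∫ ω, (g (k + 1) ω - g k ω) ^ 2 ∂μ ≤ b k) {p q : ℕ} (hpq : p ≤ q) :
    ∫ ω, (g q ω - g p ω) ^ 2 ∂μ ≤ ∑ t ∈ Ico p q, b t := by
  induction q, hpq using Nat.le_induction with
  | base => simp
  | succ q hpq ih =>
    have hsplit : ∀ ω, g (q + 1) ω - g p ω = (g q - g p) ω + (g (q + 1) - g q) ω :=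
      fun ω => by simp
    simp_rw [hsplit]
    rw [integral_add_sq_of_condExp_eq_zero (ℱ.le q)
      ((hg.stronglyMeasurable q).sub ((hg.stronglyMeasurable p).mono (ℱ.mono hpq)))
      ((hg2 q).sub (hg2 p)) ((hg2 (q + 1)).sub (hg2 q)) (hg.condExp_succ_sub_eq_zero q),
      sum_Ico_succ_top hpq]
    simp only [Pi.sub_apply]
    linarith [hinc q]

theorem exists_memLp_tendsto_integral_sq_sub [IsProbabilityMeasure μ] (hg : Martingale g ℱ μ)
    (hg2 : ∀ k, MemLp (g k) 2 μ) {b : ℕ → ℝ}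
    (hinc : ∀ k, ∫ ω, (g (k + 1) ω - g k ω) ^ 2 ∂μ ≤ b k) (hb : Summable b) :
    ∃ Y : Ω → ℝ, MemLp Y 2 μ ∧ Tendsto (fun k => ∫ ω, (g k ω - Y ω) ^ 2 ∂μ) atTop (𝓝 0) ∧
      ∫ ω, Y ω ∂μ = ∫ ω, g 0 ω ∂μ ∧ ∫ ω, (Y ω - g 0 ω) ^ 2 ∂μ ≤ ∑' k, b k := by
  have hb0 : ∀ k, 0 ≤ b k := fun k => (integral_nonneg fun ω => sq_nonneg _).trans (hinc k)
  set F : ℕ → Lp ℝ 2 μ := fun k => (hg2 k).toLp (g k)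
  have hdistF : ∀ p q, p ≤ q → dist (F q) (F p) ^ 2 ≤ ∑ t ∈ Ico p q, b t := fun p q hpq => by
    rw [MemLp.dist_toLp_sq]
    exact hg.integral_sub_sq_le_sum_Ico hg2 hinc hpq
  have hF : CauchySeq F := by
    refine cauchySeq_of_dist_sq_le_dist hb.hasSum.tendsto_sum_nat.cauchySeq fun p q hpq => ?_
    rw [dist_comm (F p), Real.dist_eq, abs_sub_comm, ← sum_Ico_eq_sub _ hpq,
      abs_of_nonneg (sum_nonneg fun t _ => hb0 t)]
    exact hdistF p q hpq
  obtain ⟨Y, hFY⟩ := cauchySeq_tendsto_of_complete hF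
  rw [← Lp.toLp_coeFn Y (Lp.memLp Y)] at hFY
  have hlim : Tendsto (fun k => ∫ ω, (g k ω - Y ω) ^ 2 ∂μ) atTop (𝓝 0) := by
    have := (tendsto_iff_dist_tendsto_zero.1 hFY).pow 2
    simp only [F, MemLp.dist_toLp_sq, zero_pow two_ne_zero] at this
    exact this
  refine ⟨Y, Lp.memLp Y, hlim, ?_, ?_⟩
  · refine tendsto_nhds_unique
      (tendsto_integral_of_tendsto_integral_sq_sub hg2 (Lp.memLp Y) hlim) ?_
    exact tendsto_const_nhds.congr fun k => by
      simpa using hg.setIntegral_eq k.zero_le MeasurableSet.univ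
  · rw [← MemLp.dist_toLp_sq (Lp.memLp Y) (hg2 0)]
    refine le_of_tendsto' ((hFY.dist tendsto_const_nhds).pow 2) fun k => ?_
    refine (hdistF 0 k k.zero_le).trans ?_
    rw [Nat.Ico_zero_eq_range]
    exact hb.sum_le_tsum _ fun t _ => hb0 t

end Martingale

end MeasureTheory

def IsConsensusIteration {ι Ω : Type*} [Fintype ι] [DecidableEq ι] (L : Matrix ι ι ℝ)
    (α : ℕ → ℝ) (w x : ℕ → Ω → ι → ℝ) : Prop :=
  ∀ k ω, x (k + 1) ω = (1 - α k • L) *ᵥ x k ω + α k • w k ω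

namespace IsConsensusIteration

variable {ι : Type*} [Fintype ι] [DecidableEq ι] {Ω : Type*} {mΩ : MeasurableSpace Ω}
  {μ : Measure Ω} {ℱ : Filtration ℕ mΩ} {L : Matrix ι ι ℝ} {α : ℕ → ℝ} {w x : ℕ → Ω → ι → ℝ}

lemma memLp (hrec : IsConsensusIteration L α w x) {p : ENNReal} (hx0 : MemLp (x 0) p μ)
    (hw : ∀ k, MemLp (w k) p μ) (k : ℕ) :
    MemLp (x k) p μ := by
  induction k with
  | zero => exact hx0
  | succ k ih =>
    have hx : x (k + 1) = (fun ω => (1 - α k • L) *ᵥ x k ω) + α k • w k := funext (hrec k)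
    rw [hx]
    exact MemLp.add (ih.mulVec _) ((hw k).const_smul _)

lemma expect_succ_sub (hrec : IsConsensusIteration L α w x) (hL : L.IsSymm)
    (hL1 : L *ᵥ (fun _ => 1) = 0) (k : ℕ) (ω : Ω) :
    𝔼 i, x (k + 1) ω i - 𝔼 i, x k ω i = α k * 𝔼 i, w k ω i := by
  rw [hrec k, one_sub_smul_mulVec, expect_sub_smul_mulVec_add hL hL1, add_sub_cancel_left]

lemma martingale_expect [IsFiniteMeasure μ] (hrec : IsConsensusIteration L α w x)
    (hL : L.IsSymm) (hL1 : L *ᵥ (fun _ => 1) = 0) (hx : ∀ k, Measurable[ℱ k] (x k))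
    (hx2 : ∀ k, MemLp (x k) 2 μ) (hw2 : ∀ k, MemLp (w k) 2 μ)
    (hw : ∀ k i, μ[fun ω => w k ω i | ℱ k] =ᵐ[μ] 0) :
    Martingale (fun k ω => 𝔼 i, x k ω i) ℱ μ := by
  refine martingale_of_condExp_sub_eq_zero_nat
    (fun k => (continuous_expect.measurable.comp (hx k)).stronglyMeasurable)
    (fun k => (hx2 k).expect.integrable one_le_two) fun k => ?_
  have hinc : (fun ω => 𝔼 i, x (k + 1) ω i) - (fun ω => 𝔼 i, x k ω i)
      = α k • fun ω => 𝔼 i, w k ω i := by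
    ext ω
    exact hrec.expect_succ_sub hL hL1 k ω
  rw [hinc]
  filter_upwards [condExp_smul (α k) (fun ω => 𝔼 i, w k ω i) (ℱ k),
    condExp_expect_eq_zero ((hw2 k).integrable one_le_two) (hw k)] with ω h1 h2
  simp [h1, h2]

lemma integral_sq_expect_succ_sub_le [IsFiniteMeasure μ] (hrec : IsConsensusIteration L α w x)
    (hL : L.IsSymm) (hL1 : L *ᵥ (fun _ => 1) = 0) {M : ℝ} (hw2 : ∀ k, MemLp (w k) 2 μ)
    (hw_bound : ∀ k, ∫ ω, ∑ i, w k ω i ^ 2 ∂μ ≤ M) (k : ℕ) :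
    ∫ ω, (𝔼 i, x (k + 1) ω i - 𝔼 i, x k ω i) ^ 2 ∂μ ≤ M / card ι * α k ^ 2 := by
  have hw_sq : Integrable (fun ω => ∑ i, w k ω i ^ 2) μ :=
    integrable_finsetSum _ fun i _ => ((hw2 k).eval i).integrable_sq
  simp_rw [hrec.expect_succ_sub hL hL1 k]
  calc ∫ ω, (α k * 𝔼 i, w k ω i) ^ 2 ∂μ
      ≤ ∫ ω, α k ^ 2 * ((∑ i, w k ω i ^ 2) / card ι) ∂μ := by
        refine integral_mono ((hw2 k).expect.const_mul (α k)).integrable_sq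
          ((hw_sq.div_const _).const_mul _) fun ω => ?_
        rw [mul_pow]
        gcongr
        exact sq_expect_le_sum_sq_div_card _
    _ = α k ^ 2 * ((∫ ω, ∑ i, w k ω i ^ 2 ∂μ) / card ι) := by
        rw [integral_const_mul, integral_div]
    _ ≤ M / card ι * α k ^ 2 := by
        rw [mul_comm]
        gcongr
        exact hw_bound k

lemma integral_sum_balance_sq_succ_le [IsFiniteMeasure μ] (hrec : IsConsensusIteration L α w x)
    (hL : L.IsSymm) (hL1 : L *ᵥ (fun _ => 1) = 0) {lam M : ℝ}
    (hgap : ∀ v : ι → ℝ, ∑ i, v i = 0 → lam * ∑ i, v i ^ 2 ≤ v ⬝ᵥ L *ᵥ v)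
    (hα : ∀ k, 0 ≤ α k) (hx : ∀ k, Measurable[ℱ k] (x k)) (hx2 : ∀ k, MemLp (x k) 2 μ)
    (hw2 : ∀ k, MemLp (w k) 2 μ) (hw : ∀ k i, μ[fun ω => w k ω i | ℱ k] =ᵐ[μ] 0)
    (hw_bound : ∀ k, ∫ ω, ∑ i, w k ω i ^ 2 ∂μ ≤ M) (k : ℕ) :
    ∫ ω, ∑ i, balance (x (k + 1) ω) i ^ 2 ∂μ ≤
      (1 - 2 * lam * α k + (∑ i, ∑ j, L i j ^ 2) * α k ^ 2) *
        ∫ ω, ∑ i, balance (x k ω) i ^ 2 ∂μ + M * α k ^ 2 := by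
  simp_rw [hrec k, one_sub_smul_mulVec, balance_sub_smul_mulVec_add hL hL1]
  refine (integral_sum_sq_sub_smul_mulVec_add_le (ℱ.le k) (hα k) hgap
    (continuous_balance.measurable.comp (hx k)) (hx2 k).balance (fun ω => sum_balance _)
    (hw2 k).balance (condExp_balance_eq_zero ((hw2 k).integrable one_le_two) (hw k))).trans ?_
  have hν : ∫ ω, ∑ i, balance (w k ω) i ^ 2 ∂μ ≤ M :=
    (integral_mono (integrable_finsetSum _ fun i _ => ((hw2 k).balance.eval i).integrable_sq)
      (integrable_finsetSum _ fun i _ => ((hw2 k).eval i).integrable_sq)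
      fun ω => sum_balance_sq_le _).trans (hw_bound k)
  rw [mul_comm M]
  exact add_le_add le_rfl (mul_le_mul_of_nonneg_left hν (sq_nonneg _))

end IsConsensusIteration

theorem mean_square_average_consensus_general {N : ℕ}
    {Ω : Type*} {mΩ : MeasurableSpace Ω} (μ : MeasureTheory.Measure Ω) [MeasureTheory.IsProbabilityMeasure μ]
    (ℱ : MeasureTheory.Filtration ℕ mΩ)
    (L : Matrix (Fin N) (Fin N) ℝ) (hLsymm : L.IsSymm)
    (hL1 : L.mulVec (fun _ => (1 : ℝ)) = 0)
    (lam : ℝ) (hlam : 0 < lam)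
    (hgap : ∀ v : Fin N → ℝ, (∑ i, v i) = 0 →
      lam * (∑ i, (v i) ^ 2) ≤ v ⬝ᵥ L.mulVec v)
    (α : ℕ → ℝ) (hα_pos : ∀ k, 0 < α k)
    (hα_div : Filter.Tendsto (fun n => ∑ k ∈ Finset.range n, α k) Filter.atTop Filter.atTop)
    (hα_sq : Summable (fun k => (α k) ^ 2))
    (M : ℝ) (hM : 0 ≤ M)
    (w : ℕ → Ω → Fin N → ℝ)
    (hw_L2 : ∀ k, MeasureTheory.MemLp (w k) 2 μ)
    (hw_cond : ∀ k i, μ[(fun ω => w k ω i) | ℱ k] =ᵐ[μ] 0)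
    (hw_bound : ∀ k, ∫ ω, (∑ i, (w k ω i) ^ 2) ∂μ ≤ M)
    (x : ℕ → Ω → Fin N → ℝ) (ξ : Fin N → ℝ) (hx0 : ∀ ω, x 0 ω = ξ)
    (hx_meas : ∀ k, Measurable[ℱ k] (x k))
    (hrec : ∀ k ω, x (k + 1) ω =
      ((1 : Matrix (Fin N) (Fin N) ℝ) - α k • L).mulVec (x k ω) + α k • w k ω) :
    ∃ xstar : Ω → ℝ, MemLp xstar 2 μ ∧
      (∀ i : Fin N,
        Tendsto (fun k => ∫ ω, (x k ω i - xstar ω) ^ 2 ∂μ) atTop (nhds 0)) ∧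
      (∫ ω, xstar ω ∂μ) = (∑ i, ξ i) / N ∧
      ProbabilityTheory.variance xstar μ ≤ (M / N) * ∑' t, (α t) ^ 2 := by
  have hrec : IsConsensusIteration L α w x := hrec
  have hα : ∀ k, 0 ≤ α k := fun k => (hα_pos k).le
  have hx2 : ∀ k, MemLp (x k) 2 μ := hrec.memLp (by rw [funext hx0]; exact memLp_const ξ) hw_L2
  have hmart := hrec.martingale_expect hLsymm hL1 hx_meas hx2 hw_L2 hw_cond
  obtain ⟨X, hX2, hX_lim, hX_mean, hX_var⟩ := hmart.exists_memLp_tendsto_integral_sq_sub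
    (fun k => (hx2 k).expect) (hrec.integral_sq_expect_succ_sub_le hLsymm hL1 hw_L2 hw_bound)
    (hα_sq.mul_left _)
  have hV : Tendsto (fun k => ∫ ω, ∑ i, balance (x k ω) i ^ 2 ∂μ) atTop (𝓝 0) :=
    tendsto_zero_of_le_one_sub_two_mul_add_sq hlam hM
      (fun k => integral_nonneg fun ω => sum_nonneg fun i _ => sq_nonneg _) hα
      ((not_summable_iff_tendsto_nat_atTop_of_nonneg hα).2 hα_div) hα_sq
      (hrec.integral_sum_balance_sq_succ_le hLsymm hL1 hgap hα hx_meas hx2 hw_L2 hw_cond hw_bound)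
  have hxbar0 : ∀ ω, 𝔼 i, x 0 ω i = (∑ i, ξ i) / N := fun ω => by
    rw [hx0, Fintype.expect_eq_sum_div_card, Fintype.card_fin]
  refine ⟨X, hX2, fun i => ?_, by simp [hX_mean, hxbar0], ?_⟩
  · refine tendsto_integral_sq_sub_trans (fun k => (hx2 k).eval i) (fun k => (hx2 k).expect) hX2
      (squeeze_zero (fun k => integral_nonneg fun ω => sq_nonneg _)
        (fun k => integral_sq_le_integral_sum_sq (hx2 k).balance i) hV) hX_lim
  · rw [ProbabilityTheory.variance_eq_integral hX2.aemeasurable, hX_mean]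
    simpa [hxbar0, tsum_mul_left] using hX_var

/-- Theorem 2 (mean square average consensus): there is a square-integrable random
variable `x*` with `E[x*] = (1/N) ∑ᵢ xᵢ(0)` and `Var(x*) ≤ (M/N) ∑ₜ α(t)²` such that
every agent's state converges to `x*` in mean square. -/
theorem mean_square_average_consensus {N : ℕ} (hN : 2 ≤ N)
    {Ω : Type*} {mΩ : MeasurableSpace Ω} (μ : MeasureTheory.Measure Ω) [MeasureTheory.IsProbabilityMeasure μ]
    (ℱ : MeasureTheory.Filtration ℕ mΩ)
    (L : Matrix (Fin N) (Fin N) ℝ) (hLsymm : L.IsSymm)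
    (hL1 : L.mulVec (fun _ => (1 : ℝ)) = 0)
    (lam : ℝ) (hlam : 0 < lam)
    (hgap : ∀ v : Fin N → ℝ, (∑ i, v i) = 0 →
      lam * (∑ i, (v i) ^ 2) ≤ v ⬝ᵥ L.mulVec v)
    (α : ℕ → ℝ) (hα_pos : ∀ k, 0 < α k)
    (hdiag : ∀ (i : Fin N) (k : ℕ), 0 < 1 - α k * L i i)
    (hα_div : Filter.Tendsto (fun n => ∑ k ∈ Finset.range n, α k) Filter.atTop Filter.atTop)
    (hα_sq : Summable (fun k => (α k) ^ 2))
    (M : ℝ) (hM : 0 ≤ M)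
    (w : ℕ → Ω → Fin N → ℝ)
    (hw_meas : ∀ k, Measurable[ℱ (k + 1)] (w k))
    (hw_L2 : ∀ k, MeasureTheory.MemLp (w k) 2 μ)
    (hw_cond : ∀ k i, μ[(fun ω => w k ω i) | ℱ k] =ᵐ[μ] 0)
    (hw_bound : ∀ k, ∫ ω, (∑ i, (w k ω i) ^ 2) ∂μ ≤ M)
    (x : ℕ → Ω → Fin N → ℝ) (ξ : Fin N → ℝ) (hx0 : ∀ ω, x 0 ω = ξ)
    (hx_meas : ∀ k, Measurable[ℱ k] (x k))
    (hrec : ∀ k ω, x (k + 1) ω =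
      ((1 : Matrix (Fin N) (Fin N) ℝ) - α k • L).mulVec (x k ω) + α k • w k ω) :
    ∃ xstar : Ω → ℝ, MemLp xstar 2 μ ∧
      (∀ i : Fin N,
        Tendsto (fun k => ∫ ω, (x k ω i - xstar ω) ^ 2 ∂μ) atTop (nhds 0)) ∧
      (∫ ω, xstar ω ∂μ) = (∑ i, ξ i) / N ∧
      ProbabilityTheory.variance xstar μ ≤ (M / N) * ∑' t, (α t) ^ 2 :=
  mean_square_average_consensus_general μ ℱ L hLsymm hL1 lam hlam hgap α hα_pos hα_div hα_sq M hM w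
    hw_L2 hw_cond hw_bound x ξ hx0 hx_meas hrec
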